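/- arXiv:math/0001175 — 5 statements merged into one kernel-verified Lean document; each statement's English description precedes it below -/
import Mathlib

section
/- As a formal power series identity in u: ∏_{i ≥ 1} (1 - u^i/q^i)^{-M_i} = 1 + (q-1)u / (q(1-u)), where M_i = (1/i) ∑_{d|i} μ(d) (q^{i/d} - 1). -/
open PowerSeries

/-!
Möbius inversion turns the hypothesis on `M` into `∑_{d ∣ m} d M_d = q^m - 1`. The logarithmic
derivative `X f'/f` of `1 - X^i` is `-i ∑_k X^{ik}`, so `(1 - X) ∏ (1 - X^i)^{M_i}` and `1 - qX`
have the same logarithmic derivative and the same constant term, hence agree modulo `X^{n+1}`.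
Substituting `X ↦ X/q` and inverting gives the claim, as
`1 + (q-1)u/(q(1-u)) = (1 - u/q)/(1 - u)`.
-/

theorem Nat.sum_Icc_ite_dvd_eq_sum_divisors {M : Type*} [AddCommMonoid M] (f : ℕ → M) {m n : ℕ}
    (hm : m ≠ 0) (hmn : m ≤ n) :
    ∑ i ∈ Finset.Icc 1 n, (if i ∣ m then f i else 0) = ∑ d ∈ m.divisors, f d := by
  rw [← Finset.sum_filter]
  congr 1
  ext d
  simp only [Finset.mem_filter, Finset.mem_Icc, Nat.mem_divisors]
  constructor
  · rintro ⟨-, hd⟩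
    exact ⟨hd, hm⟩
  · rintro ⟨hd, -⟩
    have hd_le := Nat.le_of_dvd (Nat.pos_of_ne_zero hm) hd
    exact ⟨⟨Nat.pos_of_dvd_of_pos hd (Nat.pos_of_ne_zero hm), hd_le.trans hmn⟩, hd⟩

theorem sum_divisors_mul_eq_pow_sub_one {q : ℕ} {M : ℕ → ℕ}
    (hM : ∀ i : ℕ, 0 < i →
      (i : ℤ) * M i = ∑ d ∈ i.divisors, ArithmeticFunction.moebius d * ((q : ℤ) ^ (i / d) - 1))
    {m : ℕ} (hm : 0 < m) : ∑ d ∈ m.divisors, (d : ℤ) * M d = (q : ℤ) ^ m - 1 := by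
  refine (ArithmeticFunction.sum_eq_iff_sum_mul_moebius_eq (f := fun i => (i : ℤ) * M i)
    (g := fun m => (q : ℤ) ^ m - 1)).mpr (fun i hi => ?_) m hm
  rw [hM i hi]
  exact Nat.sum_divisorsAntidiagonal fun x y => (ArithmeticFunction.moebius x : ℤ) * (q ^ y - 1)

namespace PowerSeries

section CommRing

variable {R : Type*} [CommRing R]

/-- `g` is `X f' / f`, written without division. -/
def IsLogDeriv (f g : R⟦X⟧) : Prop := X * d⁄dX R f = f * g

theorem isLogDeriv_one : IsLogDeriv (1 : R⟦X⟧) 0 := by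
  simp [IsLogDeriv]

theorem IsLogDeriv.mul {f₁ f₂ g₁ g₂ : R⟦X⟧} (h₁ : IsLogDeriv f₁ g₁) (h₂ : IsLogDeriv f₂ g₂) :
    IsLogDeriv (f₁ * f₂) (g₁ + g₂) := by
  unfold IsLogDeriv at *
  rw [Derivation.leibniz, smul_eq_mul, smul_eq_mul]
  linear_combination f₁ * h₂ + f₂ * h₁

theorem IsLogDeriv.pow {f g : R⟦X⟧} (h : IsLogDeriv f g) (k : ℕ) :
    IsLogDeriv (f ^ k) (k * g) := by
  induction k with
  | zero => simpa using isLogDeriv_one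
  | succ k ih => simpa [pow_succ, add_one_mul] using ih.mul h

theorem IsLogDeriv.prod {ι : Type*} {s : Finset ι} {f g : ι → R⟦X⟧}
    (h : ∀ i ∈ s, IsLogDeriv (f i) (g i)) : IsLogDeriv (∏ i ∈ s, f i) (∑ i ∈ s, g i) := by
  classical
  induction s using Finset.induction_on with
  | empty => simpa using isLogDeriv_one
  | insert a s ha ih =>
    rw [Finset.prod_insert ha, Finset.sum_insert ha]
    exact (h a (Finset.mem_insert_self a s)).mul (ih fun i hi => h i (Finset.mem_insert_of_mem hi))

def logDerivOneSub (a : R) (i : ℕ) : R⟦X⟧ :=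
  mk fun m => if m ≠ 0 ∧ i ∣ m then -(i * a ^ (m / i)) else 0

theorem isLogDeriv_one_sub_C_mul_X_pow (a : R) {i : ℕ} (hi : i ≠ 0) :
    IsLogDeriv (1 - C a * X ^ i) (logDerivOneSub a i) := by
  set G := expand i hi (rescale a (mk 1))
  have hG : G * (1 - C a * X ^ i) = 1 := by
    simpa [rescale_X, expand_C, expand_X] using
      congrArg (fun f => expand i hi (rescale a f)) (mk_one_mul_one_sub_eq_one (S := R))
  have hL : logDerivOneSub a i = -(i : R⟦X⟧) * (G - 1) := by
    ext m
    rw [neg_mul, map_neg, ← map_natCast (C (R := R)), coeff_C_mul, map_sub, coeff_expand,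
      coeff_one, logDerivOneSub, coeff_mk]
    rcases eq_or_ne m 0 with rfl | hm
    · simp
    · split_ifs <;> simp_all [coeff_rescale]
  rw [hL]
  clear_value G
  obtain ⟨j, rfl⟩ := Nat.exists_eq_add_one_of_ne_zero hi
  unfold IsLogDeriv
  simp only [map_sub, derivative_one, Derivation.leibniz, derivative_C, derivative_pow,
    derivative_X, smul_eq_mul]
  push_cast
  linear_combination ((j : R⟦X⟧) + 1) * hG

theorem constantCoeff_prod_one_sub_pow_pow {f : R⟦X⟧} (hf : constantCoeff f = 0) (k : ℕ → ℕ)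
    (n : ℕ) : constantCoeff (∏ i ∈ Finset.Icc 1 n, (1 - f ^ i) ^ k i) = 1 := by
  simp only [map_prod, map_pow, map_sub, map_one, hf]
  exact Finset.prod_eq_one fun i hi => by simp [zero_pow (by grind : i ≠ 0)]

theorem X_pow_dvd_rescale {f : R⟦X⟧} {n : ℕ} (h : X ^ n ∣ f) (a : R) : X ^ n ∣ rescale a f := by
  obtain ⟨g, rfl⟩ := h
  rw [map_mul, map_pow, rescale_X, mul_pow, mul_comm (C a ^ n), mul_assoc]
  exact dvd_mul_right _ _

end CommRing

section Field

variable {K : Type*} [Field K]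

theorem X_pow_succ_dvd_sub_C_of_X_pow_dvd_derivative [CharZero K] {w : K⟦X⟧} {n : ℕ}
    (h : X ^ n ∣ d⁄dX K w) : X ^ (n + 1) ∣ w - C (constantCoeff w) := by
  refine X_pow_dvd_iff.mpr fun m hm => ?_
  rcases m with _ | k
  · simp
  · have hk := X_pow_dvd_iff.mp h k (by omega)
    rw [coeff_derivative] at hk
    simpa [coeff_C, Nat.cast_add_one_ne_zero] using hk

theorem IsLogDeriv.X_pow_dvd_sub [CharZero K] {f h g g' : K⟦X⟧} {n : ℕ} (hf : IsLogDeriv f g)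
    (hh : IsLogDeriv h g') (hc : constantCoeff f = constantCoeff h) (h0 : constantCoeff h ≠ 0)
    (hg : X ^ (n + 1) ∣ g - g') : X ^ (n + 1) ∣ f - h := by
  set w := f * h⁻¹
  have hhw : h * w = f := by rw [mul_left_comm, PowerSeries.mul_inv_cancel _ h0, mul_one]
  have hw0 : constantCoeff w = 1 := by simp [w, hc, h0]
  clear_value w
  have hw : X * d⁄dX K w = w * (g - g') := by
    have hne : h ≠ 0 := fun h' => h0 (by simp [h'])
    refine mul_left_cancel₀ hne ?_
    have hd := congrArg (X * d⁄dX K ·) hhw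
    simp only [Derivation.leibniz, smul_eq_mul] at hd
    unfold IsLogDeriv at hf hh
    linear_combination hd - w * hh + hf - g * hhw
  have hw' : X ^ n ∣ d⁄dX K w := by
    rw [← mul_dvd_mul_iff_left (X_ne_zero (R := K)), ← pow_succ', hw]
    exact hg.mul_left w
  have hw1 := X_pow_succ_dvd_sub_C_of_X_pow_dvd_derivative hw'
  rw [hw0, map_one] at hw1
  rw [← hhw, ← mul_sub_one]
  exact hw1.mul_left h

theorem inv_prod_pow {ι : Type*} (s : Finset ι) (f : ι → K⟦X⟧) (k : ι → ℕ) :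
    (∏ i ∈ s, f i ^ k i)⁻¹ = ∏ i ∈ s, (f i)⁻¹ ^ k i :=
  let inv : K⟦X⟧ →* K⟦X⟧ :=
    { toFun := (·⁻¹), map_one' := inv_one, map_mul' := fun a b => by
        simp only [PowerSeries.mul_inv_rev, mul_comm] }
  (map_prod inv _ s).trans (Finset.prod_congr rfl fun i _ => map_pow inv (f i) (k i))

theorem X_pow_succ_dvd_one_sub_C_mul_X_mul_prod_sub [CharZero K] {b c : K} {N : ℕ → ℕ} {n : ℕ}
    (hN : ∀ m ∈ Finset.Icc 1 n, ∑ d ∈ m.divisors, (d : K) * N d = c ^ m - b ^ m) :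
    X ^ (n + 1) ∣ (1 - C b * X) * ∏ i ∈ Finset.Icc 1 n, (1 - X ^ i) ^ N i - (1 - C c * X) := by
  have hpos : ∀ i ∈ Finset.Icc 1 n, i ≠ 0 := fun i hi => by grind
  have hlinear (a : K) : IsLogDeriv (1 - C a * X) (logDerivOneSub a 1) := by
    simpa using isLogDeriv_one_sub_C_mul_X_pow a one_ne_zero
  have hlog : IsLogDeriv ((1 - C b * X) * ∏ i ∈ Finset.Icc 1 n, (1 - X ^ i) ^ N i)
      (logDerivOneSub b 1 + ∑ i ∈ Finset.Icc 1 n, (N i : K⟦X⟧) * logDerivOneSub 1 i) :=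
    (hlinear b).mul <| IsLogDeriv.prod fun i hi => by
      have h := (isLogDeriv_one_sub_C_mul_X_pow (1 : K) (hpos i hi)).pow (N i)
      rwa [map_one, one_mul] at h
  refine hlog.X_pow_dvd_sub (hlinear c)
    (by simp [constantCoeff_prod_one_sub_pow_pow constantCoeff_X]) (by simp)
    (X_pow_dvd_iff.mpr fun m hm => ?_)
  rcases eq_or_ne m 0 with rfl | hm0
  · simp [logDerivOneSub]
  · have hsum : ∑ i ∈ Finset.Icc 1 n, coeff m ((N i : K⟦X⟧) * logDerivOneSub 1 i) =
        -(c ^ m - b ^ m) := by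
      rw [← hN m (by grind), ← Finset.sum_neg_distrib,
        ← Nat.sum_Icc_ite_dvd_eq_sum_divisors _ hm0 (Nat.lt_succ_iff.mp hm)]
      refine Finset.sum_congr rfl fun i _ => ?_
      rw [← map_natCast (C (R := K)), coeff_C_mul, logDerivOneSub, coeff_mk]
      split_ifs <;> simp_all [mul_comm]
    rw [map_sub, map_add, map_sum, hsum]
    simp only [logDerivOneSub, coeff_mk, isUnit_one.dvd, Nat.div_one, and_true, if_pos hm0]
    ring

theorem one_add_C_mul_X_mul_inv_one_sub_X (a : K) :
    1 + C (1 - a) * X * (1 - X)⁻¹ = (1 - C a * X) * (1 - X : K⟦X⟧)⁻¹ := by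
  rw [map_sub, map_one]
  linear_combination (-1 : K⟦X⟧) * PowerSeries.mul_inv_cancel (1 - X : K⟦X⟧) (by simp)

theorem X_pow_dvd_inv_sub_mul_inv {P a b : K⟦X⟧} {n : ℕ} (hP : constantCoeff P ≠ 0)
    (hb : constantCoeff b ≠ 0) (h : X ^ n ∣ a * P - b) : X ^ n ∣ P⁻¹ - a * b⁻¹ := by
  have hdiff : P⁻¹ - a * b⁻¹ = -(P⁻¹ * b⁻¹) * (a * P - b) := by
    linear_combination (-P⁻¹) * PowerSeries.mul_inv_cancel b hb +
      (b⁻¹ * a) * PowerSeries.mul_inv_cancel P hP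
  rw [hdiff]
  exact h.mul_left _

end Field

end PowerSeries

/-- Stated coefficientwise: the `i`-th factor is `1 + O(u^i)`, so the coefficient of `u^n` only
involves the factors with `i ≤ n`. -/
theorem prod_nonzero_constant_irreducible_count
    (q : ℕ) (hq : 2 ≤ q) (M : ℕ → ℕ)
    (hM : ∀ i : ℕ, 0 < i →
      (i : ℤ) * M i = ∑ d ∈ i.divisors, ArithmeticFunction.moebius d * ((q : ℤ) ^ (i / d) - 1))
    (n : ℕ) :
    PowerSeries.coeff (R := ℚ) n
      (∏ i ∈ Finset.Icc 1 n,
        ((1 - (PowerSeries.C (R := ℚ) (1 / q) * PowerSeries.X) ^ i)⁻¹) ^ M i) =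
    PowerSeries.coeff (R := ℚ) n
      (1 + PowerSeries.C (R := ℚ) ((q - 1) / q) * PowerSeries.X * (1 - PowerSeries.X)⁻¹) := by
  have hq0 : (q : ℚ) ≠ 0 := by exact_mod_cast (by omega : q ≠ 0)
  set t : ℚ⟦X⟧ := C (R := ℚ) (1 / q) * X
  set P := ∏ i ∈ Finset.Icc 1 n, (1 - t ^ i) ^ M i
  have hcount (m : ℕ) (hm : m ∈ Finset.Icc 1 n) :
      ∑ d ∈ m.divisors, (d : ℚ) * M d = (q : ℚ) ^ m - 1 ^ m := by
    rw [one_pow]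
    exact_mod_cast sum_divisors_mul_eq_pow_sub_one hM (by grind)
  have hEuler : X ^ (n + 1) ∣ (1 - t) * P - (1 - X) := by
    have h := X_pow_dvd_rescale (X_pow_succ_dvd_one_sub_C_mul_X_mul_prod_sub hcount) (1 / q : ℚ)
    have hqt : (q : ℚ⟦X⟧) * C (q : ℚ)⁻¹ = 1 := by
      rw [← map_natCast C, ← map_mul, mul_inv_cancel₀ hq0, map_one]
    simpa [map_prod, rescale_X, mul_pow, t, P, ← mul_assoc, hqt] using h
  have hP : constantCoeff P ≠ 0 := by
    rw [constantCoeff_prod_one_sub_pow_pow (by simp [t]) M n]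
    exact one_ne_zero
  rw [← inv_prod_pow, show ((q : ℚ) - 1) / q = 1 - 1 / q by field_simp,
    one_add_C_mul_X_mul_inv_one_sub_X, ← sub_eq_zero, ← map_sub]
  exact X_pow_dvd_iff.mp (X_pow_dvd_inv_sub_mul_inv hP (by simp) hEuler) n n.lt_succ_self
end

section
/- For a permutation w of {1,...,n}, define cd(w) (number of cyclic descents) as the number of indices i with 1 ≤ i ≤ n-1 such that w(i) > w(i+1), plus 1 if w(n) > w(1). Then the sum over all w in S_n of (1/(n k^{n-1})) * C(n + k - cd(w) - 1, n - 1) equals 1, for every integer k ≥ 1. -/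
open Equiv Finset

/-- The number of cyclic descents of `w`: descents at positions `1 ≤ i ≤ n-1` (0-indexed here),
plus one if `w(n) > w(1)`; equivalently, the number of positions `i` (mod `n`) with
`w(i) > w(i+1 mod n)`. -/
def cycDes {n : ℕ} (w : Perm (Fin n)) : ℕ :=
  (Finset.univ.filter (fun i : Fin n =>
    w ⟨((i : ℕ) + 1) % n, Nat.mod_lt _ i.pos⟩ < w i)).card

/-!
Every permutation of `Fin n`, `n ≥ 2`, is in exactly one way a rotation of a word
`(n - 1, u 0, …, u (n - 2))` with `u` a permutation of `Fin (n - 1)`, and its cyclic descents are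
the descents of `u` plus the one at the top letter. So the sum is `n` times
`∑ u, C(k + n - 2 - des u, n - 1)`, which is `k ^ (n - 1)` by Worpitzky's identity: the fibre of
`Tuple.sort` over `u` consists of the maps `f` with `f ∘ u` monotone and strictly increasing at
the descents of `u`, and adding to `f ∘ u` the number of free steps (those outside the descent
set) below each point is a bijection onto the strictly increasing maps into
`Fin (k + n - 2 - des u)`.
-/

section StrictSteps

variable {M : ℕ} (S : Finset (Fin M))

def freeStepsBelow (j : Fin (M + 1)) : ℕ := #{i ∈ Sᶜ | i.castSucc < j}

lemma freeStepsBelow_zero : freeStepsBelow S 0 = 0 := by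
  simp [freeStepsBelow]

lemma freeStepsBelow_le (j : Fin (M + 1)) : freeStepsBelow S j ≤ M - #S :=
  (card_filter_le _ _).trans (by simp [card_compl])

lemma freeStepsBelow_last : freeStepsBelow S (Fin.last M) = M - #S := by
  simp [freeStepsBelow, Fin.castSucc_lt_last, card_compl]

lemma freeStepsBelow_succ (t : Fin M) :
    freeStepsBelow S t.succ = freeStepsBelow S t.castSucc + if t ∈ S then 0 else 1 := by
  have hsplit : {i ∈ Sᶜ | i.castSucc < t.succ} =
      {i ∈ Sᶜ | i.castSucc < t.castSucc} ∪ {i ∈ Sᶜ | i = t} := by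
    ext i
    simp only [mem_union, mem_filter, Fin.castSucc_lt_succ_iff, Fin.castSucc_lt_castSucc_iff,
      le_iff_lt_or_eq]
    tauto
  rw [freeStepsBelow, hsplit, card_union_of_disjoint
    (disjoint_filter.2 fun i _ h => (Fin.castSucc_lt_castSucc_iff.1 h).ne)]
  split_ifs with h <;> simp [freeStepsBelow, filter_eq', h]

variable {S} {K : ℕ}

lemma freeStepsBelow_le_apply {h : Fin (M + 1) → Fin K} (hh : StrictMono h) (j : Fin (M + 1)) :
    freeStepsBelow S j ≤ h j := by
  induction j using Fin.induction with
  | zero => simp [freeStepsBelow_zero]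
  | succ i ih =>
    have hstep := freeStepsBelow_succ S i
    have hlt : h i.castSucc < h i.succ := hh i.castSucc_lt_succ
    split_ifs at hstep <;> omega

lemma apply_lt_add_freeStepsBelow {k : ℕ} {h : Fin (M + 1) → Fin (k + (M - #S))}
    (hh : StrictMono h) (j : Fin (M + 1)) : h j < k + freeStepsBelow S j := by
  induction j using Fin.reverseInduction with
  | last => have := (h (Fin.last M)).is_lt; rw [freeStepsBelow_last]; omega
  | cast i ih =>
    have hstep := freeStepsBelow_succ S i
    have hlt : h i.castSucc < h i.succ := hh i.castSucc_lt_succ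
    split_ifs at hstep <;> omega

lemma strictMono_add_freeStepsBelow {k : ℕ} {g : Fin (M + 1) → Fin k} (hg : Monotone g)
    (hS : ∀ i ∈ S, g i.castSucc < g i.succ) :
    StrictMono fun j => (g j : ℕ) + freeStepsBelow S j := by
  refine Fin.strictMono_iff_lt_succ.2 fun i => ?_
  have hstep := freeStepsBelow_succ S i
  have hle := hg i.castSucc_lt_succ.le
  split_ifs at hstep with hi
  · have := hS i hi
    omega
  · omega

lemma monotone_sub_freeStepsBelow {h : Fin (M + 1) → Fin K} (hh : StrictMono h) :
    Monotone fun j => (h j : ℕ) - freeStepsBelow S j := by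
  refine Fin.monotone_iff_le_succ.2 fun i => ?_
  have hstep := freeStepsBelow_succ S i
  have hle := freeStepsBelow_le_apply (S := S) hh i.castSucc
  have hlt : h i.castSucc < h i.succ := hh i.castSucc_lt_succ
  split_ifs at hstep <;> omega

lemma sub_freeStepsBelow_lt {h : Fin (M + 1) → Fin K} (hh : StrictMono h) {i : Fin M}
    (hi : i ∈ S) :
    (h i.castSucc : ℕ) - freeStepsBelow S i.castSucc < h i.succ - freeStepsBelow S i.succ := by
  have hstep := freeStepsBelow_succ S i
  have hle := freeStepsBelow_le_apply (S := S) hh i.castSucc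
  have hlt : h i.castSucc < h i.succ := hh i.castSucc_lt_succ
  rw [if_pos hi] at hstep
  omega

variable (S) in
def monotoneStrictAtEquiv (k : ℕ) :
    {g : Fin (M + 1) → Fin k // Monotone g ∧ ∀ i ∈ S, g i.castSucc < g i.succ} ≃
      (Fin (M + 1) ↪o Fin (k + (M - #S))) where
  toFun g := OrderEmbedding.ofStrictMono
    (fun j => ⟨g.1 j + freeStepsBelow S j, by have := freeStepsBelow_le S j; omega⟩)
    (strictMono_add_freeStepsBelow g.2.1 g.2.2)
  invFun h := ⟨fun j => ⟨h j - freeStepsBelow S j, by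
      have := apply_lt_add_freeStepsBelow h.strictMono j
      have := freeStepsBelow_le_apply (S := S) h.strictMono j
      omega⟩,
    monotone_sub_freeStepsBelow h.strictMono,
    fun i hi => sub_freeStepsBelow_lt h.strictMono hi⟩
  left_inv g := by ext j; exact Nat.add_sub_cancel _ _
  right_inv h := by ext j; exact Nat.sub_add_cancel (freeStepsBelow_le_apply h.strictMono j)

variable (S) in
lemma card_monotone_strictAt (k : ℕ) :
    Nat.card {g : Fin (M + 1) → Fin k // Monotone g ∧ ∀ i ∈ S, g i.castSucc < g i.succ} =
      (k + (M - #S)).choose (M + 1) := by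
  rw [Nat.card_congr ((monotoneStrictAtEquiv S k).trans Set.powersetCard.ofFinEmbEquiv),
    Set.powersetCard.card, Nat.card_eq_fintype_card, Fintype.card_fin]

end StrictSteps

section Descents

variable {M : ℕ}

def descents (u : Perm (Fin (M + 1))) : Finset (Fin M) := {i | u i.succ < u i.castSucc}

lemma card_descents_le (u : Perm (Fin (M + 1))) : #(descents u) ≤ M :=
  (card_le_univ _).trans_eq (Fintype.card_fin M)

lemma sort_eq_iff_monotone_strictAt_descents {α : Type*} [LinearOrder α] (f : Fin (M + 1) → α)
    (u : Perm (Fin (M + 1))) :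
    Tuple.sort f = u ↔
      Monotone (f ∘ u) ∧ ∀ i ∈ descents u, f (u i.castSucc) < f (u i.succ) := by
  rw [eq_comm, Tuple.eq_sort_iff, and_congr_right_iff]
  intro hmono
  constructor
  · intro h i hi
    refine (hmono i.castSucc_lt_succ.le).lt_of_ne fun he => ?_
    exact (h _ _ i.castSucc_lt_succ he).not_gt (mem_filter.1 hi).2
  · intro h i j hij he
    have hfiber : ((f ∘ u) ⁻¹' {f (u i)}).OrdConnected :=
      Set.ordConnected_singleton.preimage_mono hmono
    refine strictMonoOn_of_lt_succ hfiber (fun a ha has hsa => ?_) rfl he.symm hij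
    obtain ⟨t, rfl⟩ := Fin.eq_castSucc_of_ne_last (x := a) (by rintro rfl; exact ha isMax_top)
    rw [Fin.orderSucc_castSucc] at hsa ⊢
    refine lt_of_le_of_ne (not_lt.1 fun hd => ?_) (u.injective.ne t.castSucc_lt_succ.ne)
    exact (h t (mem_filter.2 ⟨mem_univ _, hd⟩)).ne (has.trans hsa.symm)

lemma card_sort_eq (k : ℕ) (u : Perm (Fin (M + 1))) :
    #{f : Fin (M + 1) → Fin k | Tuple.sort f = u} = (k + (M - #(descents u))).choose (M + 1) := by
  rw [← card_monotone_strictAt (descents u) k, ← Fintype.card_subtype, ← Nat.card_eq_fintype_card]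
  exact Nat.card_congr <| (Equiv.arrowCongr u.symm (Equiv.refl _)).subtypeEquiv
    fun f => sort_eq_iff_monotone_strictAt_descents f u

theorem sum_choose_descents (M k : ℕ) :
    ∑ u : Perm (Fin (M + 1)), (k + (M - #(descents u))).choose (M + 1) = k ^ (M + 1) := by
  simp_rw [← card_sort_eq]
  rw [← card_eq_sum_card_fiberwise (fun f _ => mem_univ (Tuple.sort f))]
  simp

end Descents

section CyclicDescents

lemma cycDes_eq_card_filter {n : ℕ} [NeZero n] (w : Perm (Fin n)) :
    cycDes w = #{i | w (i + 1) < w i} := by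
  unfold cycDes
  congr! 4 with i
  ext
  simp [Fin.val_add]

lemma cycDes_addRight_trans {n : ℕ} [NeZero n] (c : Fin n) (w : Perm (Fin n)) :
    cycDes ((Equiv.addRight c).trans w) = cycDes w := by
  rw [cycDes_eq_card_filter, cycDes_eq_card_filter]
  exact card_equiv (Equiv.addRight c) fun i => by simp [add_right_comm]

variable {N : ℕ}

-- the permutation with word `N + 1, u 0, …, u N`
def consLast (u : Perm (Fin (N + 1))) : Perm (Fin (N + 2)) :=
  (finSuccEquiv (N + 1)).trans (u.optionCongr.trans (finSuccEquiv' (Fin.last (N + 1))).symm)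

@[simp]
lemma consLast_zero (u : Perm (Fin (N + 1))) : consLast u 0 = Fin.last (N + 1) := by
  simp [consLast]

@[simp]
lemma consLast_succ (u : Perm (Fin (N + 1))) (j : Fin (N + 1)) :
    consLast u j.succ = (u j).castSucc := by
  simp [consLast]

lemma consLast_injective : Function.Injective (consLast (N := N)) := by
  intro u u' h
  ext j
  simpa using congr(Fin.val ($h j.succ))

lemma cycDes_consLast (u : Perm (Fin (N + 1))) : cycDes (consLast u) = #(descents u) + 1 := by
  rw [cycDes_eq_card_filter, card_filter, Fin.sum_univ_succ, Fin.sum_univ_castSucc, descents,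
    card_filter]
  have h0 : consLast u (0 + 1) < consLast u 0 := by
    rw [zero_add, ← Fin.succ_zero_eq_one, consLast_succ, consLast_zero]
    exact Fin.castSucc_lt_last _
  have hlast : ¬ consLast u ((Fin.last N).succ + 1) < consLast u (Fin.last N).succ := by
    simp [Fin.succ_last, Fin.le_last]
  have hstep (j : Fin N) : (j.castSucc.succ + 1 : Fin (N + 2)) = j.succ.succ := by
    ext; simp [Fin.val_add]
  rw [if_pos h0, if_neg hlast, add_zero, add_comm]
  congr 1
  refine sum_congr rfl fun j _ => ?_
  rw [hstep, consLast_succ, consLast_succ]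
  exact if_congr Fin.castSucc_lt_castSucc_iff rfl rfl

def rotConsLast (p : Fin (N + 2) × Perm (Fin (N + 1))) : Perm (Fin (N + 2)) :=
  (Equiv.addRight p.1).trans (consLast p.2)

lemma rotConsLast_bijective : Function.Bijective (rotConsLast (N := N)) := by
  rw [Fintype.bijective_iff_injective_and_card]
  refine ⟨fun ⟨c, u⟩ ⟨c', u'⟩ h => ?_, by simp [Fintype.card_perm, Nat.factorial_succ]⟩
  have hc : c = c' := by
    have h0 : consLast u' (-c + c') = consLast u' 0 := by
      simpa [rotConsLast] using (congr($h (-c))).symm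
    simpa [neg_add_eq_zero] using (consLast u').injective h0
  subst hc
  have hu : consLast u = consLast u' := by
    ext x
    simpa [rotConsLast] using congr(Fin.val ($h (x - c)))
  rw [consLast_injective hu]

lemma cycDes_rotConsLast (p : Fin (N + 2) × Perm (Fin (N + 1))) :
    cycDes (rotConsLast p) = #(descents p.2) + 1 := by
  rw [rotConsLast, cycDes_addRight_trans, cycDes_consLast]

end CyclicDescents

lemma cycDes_fin_one (w : Perm (Fin 1)) : cycDes w = 0 := by
  simp [cycDes_eq_card_filter]

theorem sum_choose_cycDes (n k : ℕ) (hn : 1 ≤ n) :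
    ∑ w : Perm (Fin n), (n + k - cycDes w - 1).choose (n - 1) = n * k ^ (n - 1) := by
  obtain _ | _ | N := n
  · omega
  · simp [cycDes_fin_one]
  · rw [← Fintype.sum_bijective _ rotConsLast_bijective _ _ fun _ => rfl, Fintype.sum_prod_type]
    simp only [cycDes_rotConsLast]
    have hchoose (u : Perm (Fin (N + 1))) :
        (N + 2 + k - (#(descents u) + 1) - 1).choose (N + 1) =
          (k + (N - #(descents u))).choose (N + 1) := by
      have := card_descents_le u
      congr 1
      omega
    simp [hchoose, sum_choose_descents]

/-- The `k`-riffle-shuffle-followed-by-cut probabilities sum to 1 over `S_n`. -/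
theorem shuffle_cut_prob_sum_eq_one (n k : ℕ) (hn : 1 ≤ n) (hk : 1 ≤ k) :
    ∑ w : Perm (Fin n),
      (1 / (n * (k : ℚ) ^ (n - 1))) * (Nat.choose (n + k - cycDes w - 1) (n - 1)) = 1 := by
  have hden : (n * (k : ℚ) ^ (n - 1)) ≠ 0 := by positivity
  rw [← mul_sum, ← Nat.cast_sum, sum_choose_cycDes n k hn]
  push_cast
  field_simp
end

section
/- Let e_n^j for j = 1,...,n be the Eulerian idempotents in the rational group algebra Q[S_n], defined by e_n^j = ∏_{i ≠ j, 1 ≤ i ≤ n} (s_n - μ_i)/(μ_j - μ_i), where s_n = ∑_{i=1}^{n-1} s_{i,n-i}, s_{i,n-i} is the sum of all permutations w with w(1)<...<w(i) and w(i+1)<...<w(n), and μ_j = 2^j - 2. Then the e_n^j are pairwise orthogonal idempotents summing to the identity of Q[S_n]. -/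
/-!
For a finite linearly ordered alphabet `α` let `Φ_α = ∑_{f : Fin n → α} sort f ∈ ℚ[S_n]`, where
`sort f` is the stable sorting permutation of the word `f`. Grouping words by their sorted
rearrangement shows `Φ_{Fin 2} = ∑_{i=0}^n s_{i,n-i} = s_n + 2`, and sorting words over the
lexicographic product alphabet gives `Φ_{Fin p} Φ_{Fin q} = Φ_{Fin pq}`, so
`Φ_{Fin 2}^k = Φ_{Fin 2^k}`. Factoring a word through the increasing enumeration of its image gives
`Φ_{Fin m} = ∑_{j=1}^n C(m, j) S_j` with `S_j` independent of `m`. Since `C(x, j)` is a polynomial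
in `x` of degree `j` without constant term, `p(Φ_{Fin 2})` is a combination of the values `p(2^t)`,
`1 ≤ t ≤ n`; hence `∏_{t=1}^n (X - 2^t)` annihilates `Φ_{Fin 2}`, and `∏_t (X - μ_t)` annihilates
`s_n`. The `e_n^j` are the Lagrange basis polynomials for the distinct nodes `μ_1, …, μ_n`
evaluated at `s_n`, and these are orthogonal idempotents summing to `1` modulo the node polynomial.
-/

open Equiv Finset

/-- `s_{i,n-i}`: the sum in `ℚ[S_n]` of all permutations `w` with
`w(1) < ... < w(i)` and `w(i+1) < ... < w(n)`. -/
noncomputable def shuffleSum (n i : ℕ) : MonoidAlgebra ℚ (Perm (Fin n)) :=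
  ∑ w ∈ Finset.univ.filter (fun w : Perm (Fin n) =>
      ∀ a b : Fin n, a < b → (((b : ℕ) < i) ∨ i ≤ (a : ℕ)) → w a < w b),
    MonoidAlgebra.single w 1

/-- `s_n = ∑_{i=1}^{n-1} s_{i,n-i}`. -/
noncomputable def sTotal (n : ℕ) : MonoidAlgebra ℚ (Perm (Fin n)) :=
  ∑ i ∈ Finset.Icc 1 (n - 1), shuffleSum n i

/-- The Eulerian idempotent `e_n^j = ∏_{i ≠ j} (s_n - μ_i)/(μ_j - μ_i)` with `μ_i = 2^i - 2`
(the product taken over `i ∈ {1,...,n} \ {j}`; all factors commute, being polynomials in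
`s_n`, so we take the product in increasing order of `i`). -/
noncomputable def euler (n j : ℕ) : MonoidAlgebra ℚ (Perm (Fin n)) :=
  (((((Finset.Icc 1 n).erase j).sort (· ≤ ·)).map (fun i =>
    (((2 ^ j - 2 : ℚ) - (2 ^ i - 2))⁻¹) • (sTotal n - ((2 ^ i - 2 : ℚ)) • 1))).prod)

open Polynomial

namespace Tuple

variable {n : ℕ} {α β : Type*} [LinearOrder α] [LinearOrder β]

theorem sort_comp_strictMono {e : α → β} (he : StrictMono e) (f : Fin n → α) :
    sort (e ∘ f) = sort f := by
  obtain ⟨hmono, hstab⟩ := eq_sort_iff.mp (rfl : sort f = sort f)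
  exact (eq_sort_iff.mpr ⟨he.monotone.comp hmono,
    fun i j hij h => hstab i j hij (he.injective h)⟩).symm

theorem sort_toLex_eq_mul (f : Fin n → α) (g : Fin n → β) :
    sort (fun i => toLex (g ((sort f)⁻¹ i), f i)) = sort f * sort g := by
  obtain ⟨hfm, hfs⟩ := eq_sort_iff.mp (rfl : sort f = sort f)
  obtain ⟨hgm, hgs⟩ := eq_sort_iff.mp (rfl : sort g = sort g)
  refine (eq_sort_iff.mpr ⟨fun i j hij => ?_, fun i j hij heq => ?_⟩).symm
  · simp only [Function.comp_apply, Perm.mul_apply, Perm.coe_inv, Equiv.symm_apply_apply]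
    rcases (hgm hij).lt_or_eq with hlt | heq
    · exact Prod.Lex.le_iff.mpr (Or.inl hlt)
    rcases hij.lt_or_eq with hij | rfl
    · exact Prod.Lex.le_iff.mpr (Or.inr ⟨heq, hfm (hgs i j hij heq).le⟩)
    · exact le_rfl
  · simp only [Perm.mul_apply, Perm.coe_inv, Equiv.symm_apply_apply, toLex_inj,
      Prod.mk.injEq] at heq
    exact hfs _ _ (hgs i j hij heq.1) heq.2

variable [Fintype α] {M : Type*} [AddCommMonoid M]

-- A word `f` is determined by its sorted rearrangement `f ∘ sort f` and by `sort f`.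
open scoped Classical in
theorem sum_sort_eq_sum_monotone (F : Perm (Fin n) → M) :
    ∑ f : Fin n → α, F (sort f) =
      ∑ c : Fin n → α with Monotone c,
        ∑ w : Perm (Fin n) with ∀ i j, i < j → c i = c j → w i < w j, F w := by
  rw [Finset.sum_sigma']
  refine Finset.sum_nbij' (fun f => ⟨f ∘ sort f, sort f⟩) (fun p => p.1 ∘ ⇑p.2⁻¹)
    (fun f _ => ?_) (fun _ _ => Finset.mem_univ _) (fun f _ => ?_) (fun p hp => ?_)
    (fun _ _ => rfl)
  · simpa using eq_sort_iff.mp (rfl : sort f = sort f)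
  · ext; simp
  · simp only [Finset.mem_sigma, Finset.mem_filter, Finset.mem_univ, true_and] at hp
    have : p.2 = sort (p.1 ∘ ⇑p.2⁻¹) :=
      eq_sort_iff.mpr ⟨by simpa [Function.comp_def] using hp.1, by simpa using hp.2⟩
    ext1
    · change (p.1 ∘ ⇑p.2⁻¹) ∘ ⇑(sort (p.1 ∘ ⇑p.2⁻¹)) = p.1
      rw [← this]
      ext; simp
    · exact heq_of_eq this.symm

end Tuple

namespace Polynomial

theorem sum_coeff_mul_eval_pow_comm {R : Type*} [CommSemiring R] (p q : R[X]) (c : R) :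
    (p.sum fun k a => a * q.eval (c ^ k)) = q.sum fun t b => b * p.eval (c ^ t) := by
  simp only [eval_eq_sum, Polynomial.sum, Finset.mul_sum]
  rw [Finset.sum_comm]
  refine Finset.sum_congr rfl fun t _ => Finset.sum_congr rfl fun k _ => ?_
  rw [← pow_mul, ← pow_mul, mul_comm k t]
  ring

theorem aeval_eq_zero_of_pow_eq_sum {R A ι : Type*} [CommSemiring R] [Semiring A]
    [Algebra R A] {x : A} {c : R} {s : Finset ι} {P : ι → R[X]} {v : ι → A}
    (hx : ∀ k, x ^ k = ∑ j ∈ s, (P j).eval (c ^ k) • v j) {p : R[X]}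
    (hp : ∀ j ∈ s, ∀ t ∈ (P j).support, p.eval (c ^ t) = 0) : aeval x p = 0 := by
  calc aeval x p = ∑ j ∈ s, (p.sum fun k a => a * (P j).eval (c ^ k)) • v j := by
        simp only [aeval_def, eval₂_eq_sum, ← Algebra.smul_def, hx, Finset.smul_sum, smul_smul,
          Polynomial.sum, Finset.sum_smul]
        exact Finset.sum_comm
    _ = 0 := by
        refine Finset.sum_eq_zero fun j hj => ?_
        rw [sum_coeff_mul_eval_pow_comm, Polynomial.sum,
          Finset.sum_eq_zero fun t ht => by rw [hp j hj t ht, mul_zero], zero_smul]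

end Polynomial

namespace Lagrange

variable {F A ι : Type*} [Field F] [Ring A] [Algebra F A] {s : Finset ι} {v : ι → F} {y : A}

theorem nodal_dvd_of_eval_eq_zero (hvs : Set.InjOn v s) {p : F[X]}
    (hp : ∀ i ∈ s, p.eval (v i) = 0) : nodal s v ∣ p :=
  Finset.prod_dvd_of_coprime
    (fun _ hi _ hj hij => isCoprime_X_sub_C_of_isUnit_sub
      (sub_ne_zero_of_ne fun h => hij (hvs hi hj h)).isUnit)
    (fun i hi => dvd_iff_isRoot.mpr (hp i hi))

theorem aeval_eq_of_eval_eq (hvs : Set.InjOn v s) (hy : aeval y (nodal s v) = 0)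
    {p q : F[X]} (hpq : ∀ i ∈ s, p.eval (v i) = q.eval (v i)) : aeval y p = aeval y q := by
  obtain ⟨r, hr⟩ := nodal_dvd_of_eval_eq_zero hvs (p := p - q) (by simpa [sub_eq_zero] using hpq)
  rw [← sub_eq_zero, ← map_sub, hr, map_mul, hy, zero_mul]

variable [DecidableEq ι]

theorem aeval_basis_mul_self (hvs : Set.InjOn v s) (hy : aeval y (nodal s v) = 0) (i : ι) :
    aeval y (Lagrange.basis s v i) * aeval y (Lagrange.basis s v i) =
      aeval y (Lagrange.basis s v i) := by
  rw [← map_mul]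
  refine aeval_eq_of_eval_eq hvs hy fun k hk => ?_
  rw [eval_mul]
  obtain rfl | hik := eq_or_ne i k
  · rw [eval_basis_self hvs hk, one_mul]
  · rw [eval_basis_of_ne hik hk, zero_mul]

theorem aeval_basis_mul_of_ne (hvs : Set.InjOn v s) (hy : aeval y (nodal s v) = 0)
    {i j : ι} (hij : i ≠ j) :
    aeval y (Lagrange.basis s v i) * aeval y (Lagrange.basis s v j) = 0 := by
  rw [← map_mul, ← map_zero (aeval (R := F) y)]
  refine aeval_eq_of_eval_eq hvs hy fun k hk => ?_
  rw [eval_mul, eval_zero]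
  obtain rfl | hik := eq_or_ne i k
  · rw [eval_basis_of_ne hij.symm hk, mul_zero]
  · rw [eval_basis_of_ne hik hk, zero_mul]

end Lagrange


noncomputable def sortSum (n : ℕ) (α : Type*) [Fintype α] [LinearOrder α] :
    MonoidAlgebra ℚ (Perm (Fin n)) :=
  ∑ f : Fin n → α, MonoidAlgebra.single (Tuple.sort f) 1

section SortSum

variable {n : ℕ} {α β : Type*} [Fintype α] [LinearOrder α] [Fintype β] [LinearOrder β]

theorem sortSum_congr (e : α ≃o β) : sortSum n α = sortSum n β :=
  Fintype.sum_equiv (Equiv.piCongrRight fun _ => e.toEquiv) _ _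
    fun f => by rw [← Tuple.sort_comp_strictMono e.strictMono f]; rfl

theorem sortSum_of_unique [Unique α] : sortSum n α = 1 := by
  rw [sortSum, Fintype.sum_unique, MonoidAlgebra.one_def,
    Tuple.sort_eq_refl_iff_monotone.mpr fun _ _ _ => (Subsingleton.elim _ _).le]
  rfl

theorem sortSum_mul : sortSum n α * sortSum n β = sortSum n (β ×ₗ α) := by
  simp only [sortSum, Finset.sum_mul_sum, MonoidAlgebra.single_mul_single, one_mul,
    ← Finset.sum_product']
  refine Fintype.sum_equiv
    { toFun := fun p i => toLex (p.2 ((Tuple.sort p.1)⁻¹ i), p.1 i)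
      invFun := fun h => (fun i => (ofLex (h i)).2,
        fun i => (ofLex (h (Tuple.sort (fun j => (ofLex (h j)).2) i))).1)
      left_inv := fun p => by ext <;> simp
      right_inv := fun h => by ext i; simp } _ _ fun p => ?_
  exact congrArg (MonoidAlgebra.single · 1) (Tuple.sort_toLex_eq_mul p.1 p.2).symm

theorem sortSum_fin_mul (p q : ℕ) :
    sortSum n (Fin p) * sortSum n (Fin q) = sortSum n (Fin (p * q)) := by
  rw [sortSum_mul, sortSum_congr (monoEquivOfFin (Fin q ×ₗ Fin p) (k := p * q)
    (by simp [mul_comm])).symm]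

theorem sortSum_fin_two_pow (k : ℕ) : sortSum n (Fin 2) ^ k = sortSum n (Fin (2 ^ k)) := by
  induction k with
  | zero => exact (sortSum_of_unique (α := Fin 1)).symm
  | succ k ih => rw [pow_succ, ih, sortSum_fin_mul, ← pow_succ]

end SortSum

section ShuffleSum

variable {n : ℕ}

def finTwoStep (n i : ℕ) : Fin n → Fin 2 := fun a => if (a : ℕ) < i then 0 else 1

theorem monotone_finTwoStep (i : ℕ) : Monotone (finTwoStep n i) := by
  intro a b hab
  have : (a : ℕ) ≤ b := hab
  unfold finTwoStep
  split_ifs <;> first | exact le_rfl | omega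

theorem card_finTwoStep_eq_zero {i : ℕ} (hi : i ≤ n) : #{a | finTwoStep n i a = 0} = i := by
  simp [finTwoStep, Fin.card_filter_val_lt, hi]

theorem Monotone.eq_finTwoStep {c : Fin n → Fin 2} (hc : Monotone c) :
    c = finTwoStep n #{a | c a = 0} := by
  have hdown {a b : Fin n} (hab : a ≤ b) (hb : c b = 0) : c a = 0 :=
    nonpos_iff_eq_zero.mp (hb ▸ hc hab)
  funext a
  unfold finTwoStep
  split_ifs with h
  · by_contra ha
    have hsub : ({b | c b = 0} : Finset (Fin n)) ⊆ Iio a := fun b hb => by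
      by_contra hba
      exact ha (hdown (not_lt.mp (by simpa using hba)) (by simpa using hb))
    have := card_le_card hsub
    rw [Fin.card_Iio] at this
    omega
  · have hsub (ha : c a = 0) : Iic a ⊆ ({b | c b = 0} : Finset (Fin n)) := fun b hb => by
      simpa using hdown (by simpa using hb) ha
    have ha : c a ≠ 0 := fun ha => h (by
      have := card_le_card (hsub ha)
      rw [Fin.card_Iic] at this
      omega)
    omega

theorem shuffleSum_eq_sum_finTwoStep (i : ℕ) :
    shuffleSum n i = ∑ w : Perm (Fin n) with
      ∀ a b, a < b → finTwoStep n i a = finTwoStep n i b → w a < w b,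
      MonoidAlgebra.single w 1 := by
  refine Finset.sum_congr (Finset.filter_congr fun w _ => forall₂_congr fun a b =>
    forall_congr' fun hab => ?_) fun _ _ => rfl
  have : (a : ℕ) < b := hab
  unfold finTwoStep
  split_ifs <;> simp <;> omega

open scoped Classical in
theorem sortSum_fin_two : sortSum n (Fin 2) = ∑ i ∈ range (n + 1), shuffleSum n i := by
  rw [sortSum, Tuple.sum_sort_eq_sum_monotone (MonoidAlgebra.single · 1)]
  symm
  refine Finset.sum_nbij' (finTwoStep n) (fun c => #{a | c a = 0}) (fun i _ => ?_) (fun c _ => ?_)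
    (fun i hi => ?_) (fun c hc => ?_) (fun i _ => ?_)
  · simpa using monotone_finTwoStep i
  · simpa [Nat.lt_succ_iff] using card_filter_le univ fun a => c a = 0
  · exact card_finTwoStep_eq_zero (by simpa [Nat.lt_succ_iff] using hi)
  · exact (Monotone.eq_finTwoStep (by simpa using hc)).symm
  · rw [shuffleSum_eq_sum_finTwoStep]

theorem shuffleSum_eq_one {i : ℕ} (h : ∀ a b : Fin n, a < b → (b : ℕ) < i ∨ i ≤ (a : ℕ)) :
    shuffleSum n i = 1 := by
  have hone : univ.filter (fun w : Perm (Fin n) =>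
      ∀ a b : Fin n, a < b → ((b : ℕ) < i ∨ i ≤ (a : ℕ)) → w a < w b) = {1} := by
    ext w
    simp only [mem_filter, mem_univ, true_and, mem_singleton]
    refine ⟨fun hw => (Perm.monotone_iff w).mp
      (StrictMono.monotone fun a b hab => hw a b hab (h a b hab)), ?_⟩
    rintro rfl a b hab -
    exact hab
  rw [shuffleSum, hone, sum_singleton, MonoidAlgebra.one_def]

theorem sTotal_eq_sortSum_sub_two (hn : 1 ≤ n) : sTotal n = sortSum n (Fin 2) - 2 := by
  have hsplit : range (n + 1) = insert 0 (insert n (Icc 1 (n - 1))) := by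
    ext; simp only [mem_range, mem_insert, mem_Icc]; omega
  rw [sortSum_fin_two, hsplit, sum_insert (by simp; omega), sum_insert (by simp; omega),
    shuffleSum_eq_one fun _ _ _ => Or.inr (Nat.zero_le _),
    shuffleSum_eq_one fun _ b _ => Or.inl b.isLt, sTotal, ← one_add_one_eq_two]
  abel

end ShuffleSum

noncomputable def surjSortSum (n j : ℕ) : MonoidAlgebra ℚ (Perm (Fin n)) :=
  ∑ g : Fin n → Fin j with Function.Surjective g, MonoidAlgebra.single (Tuple.sort g) 1

section Surjective

variable {n : ℕ} {α : Type*} [Fintype α] [LinearOrder α]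

theorem sum_image_eq_surjSortSum {s : Finset α} {j : ℕ} (hs : #s = j) :
    ∑ f : Fin n → α with univ.image f = s, MonoidAlgebra.single (Tuple.sort f) (1 : ℚ) =
      surjSortSum n j := by
  set e := s.orderEmbOfFin hs
  symm
  refine Finset.sum_bij (fun g _ => e ∘ g) (fun g hg => ?_)
    (fun _ _ _ _ h => e.injective.comp_left h) (fun f hf => ?_)
    (fun g _ => by rw [Tuple.sort_comp_strictMono e.strictMono])
  · simp only [mem_filter, mem_univ, true_and] at hg ⊢
    rw [← image_image, image_univ_of_surjective hg, image_orderEmbOfFin_univ]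
  · simp only [mem_filter, mem_univ, true_and] at hf
    have hrange (x : α) (hx : x ∈ s) : ∃ k, e k = x := by
      rwa [← Set.mem_range, range_orderEmbOfFin]
    have hmem (a : Fin n) : f a ∈ s := by rw [← hf]; exact mem_image_of_mem f (mem_univ a)
    choose g hg using fun a => hrange (f a) (hmem a)
    refine ⟨g, ?_, funext hg⟩
    simp only [mem_filter, mem_univ, true_and]
    intro k
    have hk : e k ∈ univ.image f := hf.symm ▸ s.orderEmbOfFin_mem hs k
    obtain ⟨a, -, ha⟩ := mem_image.mp hk
    exact ⟨a, e.injective (by rw [hg, ha])⟩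

theorem sortSum_eq_sum_choose (hn : 1 ≤ n) :
    sortSum n α = ∑ j ∈ Icc 1 n, ((Fintype.card α).choose j : ℚ) • surjSortSum n j := by
  have hcard (f : Fin n → α) : #(univ.image f) ∈ Icc 1 n := by
    have : Nonempty (Fin n) := ⟨⟨0, hn⟩⟩
    exact mem_Icc.mpr ⟨card_pos.mpr (univ_nonempty.image f),
      (card_image_le.trans (card_fin n).le)⟩
  rw [sortSum, ← sum_fiberwise_of_maps_to fun f _ => hcard f]
  refine sum_congr rfl fun j _ => ?_
  rw [← sum_fiberwise_of_maps_to (g := fun f => univ.image f) (t := powersetCard j univ)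
    fun f hf => mem_powersetCard.mpr ⟨subset_univ _, (mem_filter.mp hf).2⟩]
  calc _ = ∑ s ∈ powersetCard j (univ : Finset α), surjSortSum n j := by
        refine sum_congr rfl fun s hs => ?_
        rw [filter_filter, ← sum_image_eq_surjSortSum (mem_powersetCard.mp hs).2]
        refine sum_congr (filter_congr fun f _ => ⟨And.right, fun h => ⟨?_, h⟩⟩) fun _ _ => rfl
        rw [h, (mem_powersetCard.mp hs).2]
    _ = _ := by rw [sum_const, card_powersetCard, card_univ, Nat.cast_smul_eq_nsmul]

end Surjective

noncomputable def choosePoly (j : ℕ) : ℚ[X] := C (j.factorial : ℚ)⁻¹ * descPochhammer ℚ j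

theorem eval_choosePoly (m j : ℕ) : (choosePoly j).eval (m : ℚ) = m.choose j := by
  rw [choosePoly, eval_mul, eval_C, Nat.cast_choose_eq_descPochhammer_div, div_eq_inv_mul]

theorem support_choosePoly_subset {j : ℕ} (hj : j ≠ 0) : (choosePoly j).support ⊆ Icc 1 j := by
  intro t ht
  rw [mem_support_iff] at ht
  refine mem_Icc.mpr ⟨Nat.one_le_iff_ne_zero.mpr ?_, ?_⟩
  · rintro rfl
    apply ht
    rw [coeff_zero_eq_eval_zero, choosePoly, eval_mul, descPochhammer_eval_zero, if_neg hj,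
      mul_zero]
  · calc t ≤ (choosePoly j).natDegree := le_natDegree_of_ne_zero ht
      _ ≤ (descPochhammer ℚ j).natDegree := natDegree_C_mul_le _ _
      _ = j := descPochhammer_natDegree ℚ j

section Annihilation

variable {n : ℕ}

theorem sortSum_fin_two_pow_eq_sum (hn : 1 ≤ n) (k : ℕ) :
    sortSum n (Fin 2) ^ k =
      ∑ j ∈ Icc 1 n, (choosePoly j).eval ((2 : ℚ) ^ k) • surjSortSum n j := by
  rw [sortSum_fin_two_pow, sortSum_eq_sum_choose hn, Fintype.card_fin]
  simp only [← eval_choosePoly, Nat.cast_pow, Nat.cast_ofNat]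

theorem aeval_sortSum_fin_two_nodal (hn : 1 ≤ n) :
    aeval (sortSum n (Fin 2)) (Lagrange.nodal (Icc 1 n) ((2 : ℚ) ^ ·)) = 0 :=
  aeval_eq_zero_of_pow_eq_sum (sortSum_fin_two_pow_eq_sum hn) fun j hj _ ht =>
    Lagrange.eval_nodal_at_node <| Icc_subset_Icc_right (mem_Icc.mp hj).2 <|
      support_choosePoly_subset (by have := (mem_Icc.mp hj).1; omega) ht

def eulerEigenvalue (i : ℕ) : ℚ := 2 ^ i - 2

theorem eulerEigenvalue_injective : Function.Injective eulerEigenvalue := fun a b h =>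
  pow_right_injective₀ two_pos (by norm_num) (sub_left_injective h)

theorem aeval_sTotal_nodal (hn : 1 ≤ n) :
    aeval (sTotal n) (Lagrange.nodal (Icc 1 n) eulerEigenvalue) = 0 := by
  rw [sTotal_eq_sortSum_sub_two hn, ← aeval_sortSum_fin_two_nodal hn]
  have hshift : sortSum n (Fin 2) - 2 = aeval (sortSum n (Fin 2)) (X - C 2 : ℚ[X]) := by
    rw [map_sub, aeval_X, aeval_C, map_ofNat]
  rw [hshift, ← aeval_comp, Lagrange.nodal, Lagrange.nodal, Polynomial.prod_comp]
  refine congrArg _ (prod_congr rfl fun i _ => ?_)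
  rw [sub_comp, X_comp, C_comp, eulerEigenvalue, map_sub]
  ring

end Annihilation

theorem euler_eq_aeval_basis (n j : ℕ) :
    euler n j = aeval (sTotal n) (Lagrange.basis (Icc 1 n) eulerEigenvalue j) := by
  rw [euler, Lagrange.basis, prod_eq_multiset_prod, ← sort_eq ((Icc 1 n).erase j) (· ≤ ·),
    Multiset.map_coe, Multiset.prod_coe, map_list_prod, List.map_map]
  refine congrArg List.prod (List.map_congr_left fun i _ => ?_)
  rw [Function.comp_apply, Lagrange.basisDivisor, map_mul, aeval_C, map_sub, aeval_X, aeval_C,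
    Algebra.smul_def, Algebra.smul_def, mul_one, eulerEigenvalue, eulerEigenvalue]

/-- The Eulerian idempotents `e_n^j`, `j = 1, ..., n`, are pairwise orthogonal idempotents
summing to the identity of `ℚ[S_n]`. -/
theorem euler_orthogonal_idempotents (n : ℕ) (hn : 1 ≤ n) :
    (∀ j ∈ Finset.Icc 1 n, euler n j * euler n j = euler n j) ∧
    (∀ i ∈ Finset.Icc 1 n, ∀ j ∈ Finset.Icc 1 n, i ≠ j → euler n i * euler n j = 0) ∧
    (∑ j ∈ Finset.Icc 1 n, euler n j = 1) := by
  have hinj : Set.InjOn eulerEigenvalue (Icc 1 n) := eulerEigenvalue_injective.injOn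
  have hnodal := aeval_sTotal_nodal hn
  simp only [euler_eq_aeval_basis]
  refine ⟨fun j _ => Lagrange.aeval_basis_mul_self hinj hnodal j,
    fun i _ j _ hij => Lagrange.aeval_basis_mul_of_ne hinj hnodal hij, ?_⟩
  rw [← map_sum, Lagrange.sum_basis hinj ⟨1, mem_Icc.mpr ⟨le_rfl, hn⟩⟩, map_one]
end

section
/- Let N be a subgroup of S_n and χ a class function on N. Define the cycle index Z_N(χ) = (1/|N|) ∑_{w ∈ N} χ(w) ∏_i a_i^{n_i(w)}, where n_i(w) is the number of i-cycles of w, as an element of the polynomial ring in variables a_1,...,a_n. Then Z_{S_n}(Ind_N^{S_n} χ) = Z_N(χ), where Ind_N^{S_n} χ is the induced class function on S_n. -/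
open Equiv Finset

/-- The number of `i`-cycles of `w` (fixed points count as 1-cycles): the number of points
lying on an orbit of size `i`, divided by `i`. -/
def cycCount {n : ℕ} (w : Perm (Fin n)) (i : ℕ) : ℕ :=
  (Finset.univ.filter (fun x : Fin n =>
    (Finset.univ.filter (fun y : Fin n => w.SameCycle x y)).card = i)).card / i

open scoped Classical in
/-- The cycle index `Z_H(χ) = (1/|H|) ∑_{w ∈ H} χ(w) ∏_i a_i^{n_i(w)}`, as a polynomial in
variables `a_1, ..., a_n` (indexed by `ℕ`). -/
noncomputable def cycleIndex {n : ℕ} (K : Type*) [Field K]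
    (H : Subgroup (Perm (Fin n))) (χ : Perm (Fin n) → K) : MvPolynomial ℕ K :=
  (Nat.card H : K)⁻¹ • ∑ w : H,
    χ (w : Perm (Fin n)) •
      ∏ i ∈ Finset.Icc 1 n, (MvPolynomial.X i) ^ (cycCount (w : Perm (Fin n)) i)

/-! The cycle monomial `∏ a_i ^ n_i(g)` is constant on conjugacy classes. Hence, after
exchanging the two sums in `∑_g Ind χ (g) • a^{n(g)}`, each of the `|S_n|` inner sums becomes,
under the substitution `g ↦ x⁻¹ g x`, the sum `∑_{h ∈ H} χ(h) • a^{n(h)}`; the factor `|S_n|`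
cancels against the normalisation of `Z_{S_n}`. -/

theorem sum_conj_mem_smul_eq {G R M : Type*} [Group G] [Fintype G] [Semiring R]
    [AddCommMonoid M] [Module R M]
    (H : Subgroup G) [DecidablePred (· ∈ H)] (χ : G → R) (f : G → M)
    (hf : ∀ g x : G, f (x⁻¹ * g * x) = f g) :
    ∑ g : G, (∑ x : G, if x⁻¹ * g * x ∈ H then χ (x⁻¹ * g * x) else 0) • f g =
      Fintype.card G • ∑ h : H, χ h • f h := by
  have hconj (x : G) :
      ∑ g : G, (if x⁻¹ * g * x ∈ H then χ (x⁻¹ * g * x) else 0) • f g =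
        ∑ h : H, χ h • f h := by
    calc ∑ g : G, (if x⁻¹ * g * x ∈ H then χ (x⁻¹ * g * x) else 0) • f g
        = ∑ g : G, (if g ∈ H then χ g else 0) • f g :=
          Fintype.sum_equiv (MulAut.conj x⁻¹).toEquiv _ _ fun g => by
            simp only [MulEquiv.toEquiv_eq_coe, MulEquiv.coe_toEquiv, MulAut.conj_apply, inv_inv]
            rw [hf]
      _ = ∑ h : H, χ h • f h := by
          simp only [ite_smul, zero_smul]
          rw [← Finset.sum_filter]
          exact Finset.sum_subtype _ (by simp) _
  simp_rw [Finset.sum_smul]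
  rw [Finset.sum_comm]
  simp_rw [hconj, Finset.sum_const, Finset.card_univ]

theorem card_filter_comp_perm {α : Type*} [Fintype α] (e : Perm α) (p : α → Prop)
    [DecidablePred p] :
    #{a | p (e a)} = #{a | p a} :=
  Finset.card_bij' (fun a _ => e a) (fun b _ => e.symm b) (by simp) (by simp) (by simp) (by simp)

theorem cycCount_conj {n : ℕ} (g x : Perm (Fin n)) (i : ℕ) :
    cycCount (x⁻¹ * g * x) i = cycCount g i := by
  have hsame (a b : Fin n) : (x⁻¹ * g * x).SameCycle a b ↔ g.SameCycle (x a) (x b) := by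
    simpa using Perm.sameCycle_conj (f := g) (g := x⁻¹) (x := a) (y := b)
  have horbit (a : Fin n) :
      #{y | (x⁻¹ * g * x).SameCycle a y} = #{y | g.SameCycle (x a) y} := by
    simp_rw [hsame]
    exact card_filter_comp_perm x (g.SameCycle (x a))
  unfold cycCount
  simp_rw [horbit]
  rw [card_filter_comp_perm x (fun a => #{y | g.SameCycle a y} = i)]

noncomputable def cycleMonomial (R : Type*) [CommSemiring R] {n : ℕ} (g : Perm (Fin n)) :
    MvPolynomial ℕ R :=
  ∏ i ∈ Finset.Icc 1 n, MvPolynomial.X i ^ cycCount g i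

theorem cycleMonomial_conj (R : Type*) [CommSemiring R] {n : ℕ} (g x : Perm (Fin n)) :
    cycleMonomial R (x⁻¹ * g * x) = cycleMonomial R g := by
  simp only [cycleMonomial, cycCount_conj]

open scoped Classical in
theorem cycleIndex_top (K : Type*) [Field K] {n : ℕ} (χ : Perm (Fin n) → K) :
    cycleIndex K ⊤ χ = ((Fintype.card (Perm (Fin n)) : K)⁻¹ •
      ∑ g : Perm (Fin n), χ g • cycleMonomial K g) := by
  rw [cycleIndex, Subgroup.card_top, Nat.card_eq_fintype_card]
  exact congrArg _ (Fintype.sum_equiv Subgroup.topEquiv.toEquiv _ _ fun _ => rfl)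

open scoped Classical in
theorem cycleIndex_induced_general (n : ℕ) (K : Type*) [Field K] [CharZero K]
    (H : Subgroup (Perm (Fin n))) (χ : Perm (Fin n) → K) :
    cycleIndex K (⊤ : Subgroup (Perm (Fin n)))
      (fun g => (Nat.card H : K)⁻¹ *
        ∑ x : Perm (Fin n), if x⁻¹ * g * x ∈ H then χ (x⁻¹ * g * x) else 0) =
    cycleIndex K H χ := by
  have hcard : (Fintype.card (Perm (Fin n)) : K) ≠ 0 := Nat.cast_ne_zero.mpr Fintype.card_ne_zero
  rw [cycleIndex_top]
  simp_rw [mul_smul]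
  rw [← Finset.smul_sum, sum_conj_mem_smul_eq H χ _ (cycleMonomial_conj K),
    ← Nat.cast_smul_eq_nsmul K, smul_smul, smul_smul, mul_right_comm, inv_mul_cancel₀ hcard,
    one_mul]
  rfl

open scoped Classical in
/-- If `χ` is a class function on a subgroup `H ≤ S_n` with values in a field of
characteristic zero, then `Z_{S_n}(Ind_H^{S_n} χ) = Z_H(χ)`. -/
theorem cycleIndex_induced (n : ℕ) (K : Type*) [Field K] [CharZero K]
    (H : Subgroup (Perm (Fin n))) (χ : Perm (Fin n) → K)
    (hχ : ∀ g x : Perm (Fin n), g ∈ H → x ∈ H → χ (x⁻¹ * g * x) = χ g) :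
    cycleIndex K (⊤ : Subgroup (Perm (Fin n)))
      (fun g => (Nat.card H : K)⁻¹ *
        ∑ x : Perm (Fin n), if x⁻¹ * g * x ∈ H then χ (x⁻¹ * g * x) else 0) =
    cycleIndex K H χ :=
  cycleIndex_induced_general n K H χ
end

section
/- The expected number of fixed points of a random permutation of S_n distributed according to P(w) = (1/(n k^{n-1})) C(n + k - cd(w) - 1, n - 1) equals 1, for every n ≥ 1 and integer k ≥ 1. -/
/-!
Conjugating by the rotation `i ↦ i + x` of `Fin n` preserves `cd`, because `n * cd w` is the sum
of the cyclic gaps `w (i + 1) - w i` computed in `Fin n`. Hence the weight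
`C(n + k - cd w - 1, n - 1)` has the same total over the permutations fixing `x` as over those
fixing `0`. A permutation fixing `0` is `0` followed by a permutation `u` of the remaining `n - 1`
letters, with `cd w = n - 1 - asc u`, so that total is `∑ u, C(k + asc u, n - 1) = k ^ (n - 1)`.
This is Worpitzky's identity: the words of length `n - 1` over `Fin k` that `u` sorts correspond,
once the number of earlier ascents of `u` is added to each sorted letter, to the `(n - 1)`-subsets
of `Fin (k + asc u)`. Double counting the pairs `(w, x)` with `w x = x` gives `n * k ^ (n - 1)` for
the weighted number of fixed points.
-/

open Equiv Finset

section CyclicDescents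

variable {n : ℕ} [NeZero n]

lemma cycDes_eq_card (w : Perm (Fin n)) : cycDes w = #{i | w (i + 1) < w i} := by
  have hsucc (i : Fin n) : (⟨(i + 1) % n, Nat.mod_lt _ i.pos⟩ : Fin n) = i + 1 := by
    ext; simp [Fin.val_add, Nat.add_mod_mod]
  simp only [cycDes, hsucc]

/-- Summing the cyclic gaps `w (i + 1) - w i` (taken in `Fin n`) around the circle telescopes,
up to one wrap-around of `n` at every cyclic descent. -/
lemma mul_cycDes (w : Perm (Fin n)) :
    n * cycDes w = ∑ i, ((w (i + 1) - w i : Fin n) : ℕ) := by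
  have hgap (i : Fin n) : ((w (i + 1) - w i : Fin n) : ℕ) + w i =
      w (i + 1) + n * if w (i + 1) < w i then 1 else 0 := by
    split_ifs with h
    · rw [Fin.coe_sub_iff_lt.2 h]; omega
    · rw [Fin.coe_sub_iff_le.2 (not_lt.1 h)]; omega
  have hshift : ∑ i, (w (i + 1) : ℕ) = ∑ i, (w i : ℕ) :=
    Equiv.sum_comp (Equiv.addRight 1) (fun i => (w i : ℕ))
  have hsum := sum_congr rfl (fun i (_ : i ∈ univ) => hgap i)
  rw [sum_add_distrib, sum_add_distrib, hshift, ← mul_sum, ← card_filter,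
    ← cycDes_eq_card] at hsum
  omega

lemma cycDes_conj_addRight (w : Perm (Fin n)) (t : Fin n) :
    cycDes ((Equiv.addRight t)⁻¹ * w * Equiv.addRight t) = cycDes w := by
  refine Nat.eq_of_mul_eq_mul_left (Nat.pos_of_neZero n) ?_
  rw [mul_cycDes, mul_cycDes,
    ← Equiv.sum_comp (Equiv.addRight t) (fun i => ((w (i + 1) - w i : Fin n) : ℕ))]
  refine Fintype.sum_congr _ _ fun i => congrArg Fin.val ?_
  simp only [Perm.mul_apply, Perm.inv_def, Equiv.coe_addRight, Equiv.addRight_symm_apply,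
    add_right_comm i 1 t]
  abel

end CyclicDescents

lemma sum_fixing_apply_eq_of_conj_invariant {α M : Type*} [Fintype α] [DecidableEq α]
    [AddCommMonoid M] (σ : Perm α) (F : Perm α → M) (hF : ∀ w, F (σ⁻¹ * w * σ) = F w)
    (a : α) :
    ∑ w with w (σ a) = σ a, F w = ∑ w with w a = a, F w := by
  refine sum_nbij' (fun w => σ⁻¹ * w * σ) (fun w => σ * w * σ⁻¹) ?_ ?_ ?_ ?_
    fun w _ => (hF w).symm
  · intro w hw; simp_all
  · simp
  · intro w _; group
  · intro w _; group

lemma sum_fixing_cycDes_eq_sum_fixing_zero {M : Type*} [AddCommMonoid M] {n : ℕ} [NeZero n]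
    (F : ℕ → M) (x : Fin n) :
    ∑ w : Perm (Fin n) with w x = x, F (cycDes w) =
      ∑ w : Perm (Fin n) with w 0 = 0, F (cycDes w) := by
  simpa using sum_fixing_apply_eq_of_conj_invariant (Equiv.addRight x) (F ∘ cycDes)
    (fun w => congrArg F (cycDes_conj_addRight w x) :) 0

namespace Tuple

section Ascents

variable {α : Type*} [LinearOrder α] {m : ℕ}

def ascents (f : Fin (m + 1) → α) : Finset (Fin m) := {j | f j.castSucc < f j.succ}

def ascentsBefore (f : Fin (m + 1) → α) (i : Fin (m + 1)) : ℕ :=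
  #{j ∈ ascents f | j.castSucc < i}

variable (f : Fin (m + 1) → α)

@[simp]
lemma ascentsBefore_zero : ascentsBefore f 0 = 0 := by
  simp [ascentsBefore]

lemma ascentsBefore_succ (j : Fin m) :
    ascentsBefore f j.succ =
      ascentsBefore f j.castSucc + if f j.castSucc < f j.succ then 1 else 0 := by
  simp only [ascentsBefore, Fin.castSucc_lt_succ_iff, Fin.castSucc_lt_castSucc_iff,
    le_iff_lt_or_eq, filter_or]
  rw [card_union_of_disjoint (disjoint_filter.2 fun _ _ h => h.ne), filter_eq']
  split_ifs <;> simp_all [ascents]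

lemma ascentsBefore_last : ascentsBefore f (Fin.last m) = #(ascents f) := by
  simp [ascentsBefore, Fin.castSucc_lt_last]

lemma ascentsBefore_monotone : Monotone (ascentsBefore f) :=
  Fin.monotone_iff_le_succ.2 fun j => by rw [ascentsBefore_succ]; omega

lemma ascentsBefore_le_of_strictMono {g : Fin (m + 1) → ℕ} (hg : StrictMono g)
    (i : Fin (m + 1)) : ascentsBefore f i ≤ g i := by
  induction i using Fin.induction with
  | zero => simp
  | succ j ih =>
    have := hg (Fin.castSucc_lt_succ (i := j))
    rw [ascentsBefore_succ]
    split_ifs <;> omega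

lemma strictMono_add_ascentsBefore_iff (h : Fin (m + 1) → ℕ) :
    StrictMono (fun i => h i + ascentsBefore f i) ↔
      ∀ j : Fin m,
        h j.castSucc ≤ h j.succ ∧ (¬ f j.castSucc < f j.succ → h j.castSucc < h j.succ) := by
  rw [Fin.strictMono_iff_lt_succ]
  refine forall_congr' fun j => ?_
  rw [ascentsBefore_succ]
  split_ifs with hj <;> simp [hj] <;> omega

lemma sub_ascentsBefore_add {g : Fin (m + 1) → ℕ} (hg : StrictMono g) :
    (fun i => g i - ascentsBefore f i + ascentsBefore f i) = g :=
  funext fun i => Nat.sub_add_cancel (ascentsBefore_le_of_strictMono f hg i)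

lemma monotone_sub_ascentsBefore {g : Fin (m + 1) → ℕ} (hg : StrictMono g) :
    Monotone (fun i => g i - ascentsBefore f i) := by
  rw [← sub_ascentsBefore_add f hg, strictMono_add_ascentsBefore_iff] at hg
  exact Fin.monotone_iff_le_succ.2 fun j => (hg j).1

end Ascents

section Standardization

variable {α : Type*} [LinearOrder α]

/-- The tuples `h` with `Compatible σ h` are exactly the `f ∘ σ` with `Tuple.sort f = σ`
(`Tuple.eq_sort_iff`). -/
def Compatible {n : ℕ} (σ : Perm (Fin n)) (h : Fin n → α) : Prop :=
  Monotone h ∧ ∀ i j, i < j → h i = h j → σ i < σ j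

def sortFiberEquiv {n : ℕ} (σ : Perm (Fin n)) :
    {f : Fin n → α // sort f = σ} ≃ {h : Fin n → α // Compatible σ h} where
  toFun f := ⟨f.1 ∘ σ, eq_sort_iff.1 f.2.symm⟩
  invFun h := ⟨h.1 ∘ ⇑σ⁻¹,
    (eq_sort_iff.2 (by simpa [Function.comp_assoc, Compatible] using h.2)).symm⟩
  left_inv f := by ext; simp
  right_inv h := by ext; simp

lemma card_fun_eq_sum_card_compatible {n : ℕ} [Finite α] :
    Nat.card (Fin n → α) =
      ∑ σ : Perm (Fin n), Nat.card {h : Fin n → α // Compatible σ h} := by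
  rw [← Nat.card_congr (Equiv.sigmaFiberEquiv sort), Nat.card_sigma]
  exact Fintype.sum_congr _ _ fun σ => Nat.card_congr (sortFiberEquiv σ)

lemma compatible_iff {m : ℕ} (σ : Perm (Fin (m + 1))) (h : Fin (m + 1) → α) :
    Compatible σ h ↔ ∀ j : Fin m,
      h j.castSucc ≤ h j.succ ∧ (¬ σ j.castSucc < σ j.succ → h j.castSucc < h j.succ) := by
  constructor
  · rintro ⟨hmono, hties⟩ j
    refine ⟨hmono (Fin.castSucc_le_succ j), fun hdes => ?_⟩
    exact (hmono (Fin.castSucc_le_succ j)).lt_of_ne fun heq =>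
      hdes (hties _ _ Fin.castSucc_lt_succ heq)
  · intro hadj
    have hmono : Monotone h := Fin.monotone_iff_le_succ.2 fun j => (hadj j).1
    refine ⟨hmono, fun i j hij heq => ?_⟩
    induction j using Fin.induction with
    | zero => exact absurd hij (Fin.not_lt_zero i)
    | succ l ih =>
      have hil : i ≤ l.castSucc := Fin.le_castSucc_iff.2 hij
      have hflat : h l.castSucc = h l.succ :=
        le_antisymm (hmono (Fin.castSucc_le_succ l)) (heq ▸ hmono hil)
      have hasc : σ l.castSucc < σ l.succ := by
        by_contra hdes
        exact ((hadj l).2 hdes).ne hflat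
      rcases hil.lt_or_eq with hil | rfl
      · exact (ih hil (heq.trans hflat.symm)).trans hasc
      · exact hasc

end Standardization

section Worpitzky

variable {m k : ℕ}

lemma compatible_iff_strictMono (σ : Perm (Fin (m + 1))) (h : Fin (m + 1) → Fin k) :
    Compatible σ h ↔ StrictMono (fun i => (h i : ℕ) + ascentsBefore σ i) := by
  rw [compatible_iff, strictMono_add_ascentsBefore_iff]
  rfl

def compatibleEquiv (σ : Perm (Fin (m + 1))) :
    {h : Fin (m + 1) → Fin k // Compatible σ h} ≃
      (Fin (m + 1) ↪o Fin (k + #(ascents σ))) where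
  toFun h := OrderEmbedding.ofStrictMono
    (fun i => ⟨h.1 i + ascentsBefore σ i, by
      have := ascentsBefore_monotone σ (Fin.le_last i)
      rw [ascentsBefore_last] at this
      omega⟩)
    ((compatible_iff_strictMono σ h.1).1 h.2)
  invFun g := ⟨fun i => ⟨g i - ascentsBefore σ i, by
      have hg := Fin.val_strictMono.comp g.strictMono
      have hle := monotone_sub_ascentsBefore σ hg (Fin.le_last i)
      have hasc := ascentsBefore_le_of_strictMono σ hg (Fin.last m)
      have hlast := (g (Fin.last m)).isLt
      simp only [Function.comp_apply, ascentsBefore_last] at hle hasc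
      omega⟩, by
    rw [compatible_iff_strictMono]
    exact (sub_ascentsBefore_add σ (Fin.val_strictMono.comp g.strictMono)).symm ▸
      Fin.val_strictMono.comp g.strictMono⟩
  left_inv h := by ext i; exact Nat.add_sub_cancel ..
  right_inv g := by
    ext i
    exact Nat.sub_add_cancel
      (ascentsBefore_le_of_strictMono σ (Fin.val_strictMono.comp g.strictMono) i)

lemma card_orderEmbedding_fin (M N : ℕ) : Nat.card (Fin M ↪o Fin N) = N.choose M := by
  rw [Nat.card_congr Set.powersetCard.ofFinEmbEquiv, Set.powersetCard.card, Nat.card_fin]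

theorem sum_choose_add_card_ascents (m k : ℕ) :
    ∑ σ : Perm (Fin (m + 1)), (k + #(ascents σ)).choose (m + 1) = k ^ (m + 1) := by
  have hcard := card_fun_eq_sum_card_compatible (α := Fin k) (n := m + 1)
  rw [Nat.card_fun, Nat.card_fin, Nat.card_fin] at hcard
  rw [hcard]
  exact Fintype.sum_congr _ _ fun σ => by
    rw [Nat.card_congr (compatibleEquiv σ), card_orderEmbedding_fin]

end Worpitzky

end Tuple

open Tuple

lemma cycDes_decomposeFin_symm_zero {m : ℕ} (u : Perm (Fin (m + 1))) :
    cycDes (Perm.decomposeFin.symm (0, u)) + #(ascents u) = m + 1 := by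
  set W := Perm.decomposeFin.symm ((0 : Fin (m + 2)), u)
  have hW0 : W 0 = 0 := Perm.decomposeFin_symm_apply_zero 0 u
  have hWsucc (i : Fin (m + 1)) : W i.succ = (u i).succ := by
    simp [W, Perm.decomposeFin_symm_apply_succ]
  rw [cycDes_eq_card, card_filter, Fin.sum_univ_succ, Fin.sum_univ_castSucc, ascents, card_filter]
  have hdes (j : Fin m) : (if u j.succ < u j.castSucc then 1 else 0) +
      (if u j.castSucc < u j.succ then 1 else 0) = 1 := by
    have hne : u j.castSucc ≠ u j.succ := u.injective.ne Fin.castSucc_lt_succ.ne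
    rcases hne.lt_or_gt with h | h <;> simp [h, h.not_gt]
  have hnext (j : Fin m) : j.castSucc.succ + 1 = j.succ.succ := by
    rw [Fin.succ_castSucc, Fin.coeSucc_eq_succ]
  have hwrap : (Fin.last m).succ + 1 = 0 := by rw [Fin.succ_last, Fin.last_add_one]
  simp only [zero_add, hnext, hwrap, hW0, hWsucc, Fin.succ_lt_succ_iff, Fin.not_lt_zero,
    Fin.succ_pos, if_true, if_false]
  rw [add_right_comm, ← sum_add_distrib, sum_congr rfl fun j _ => hdes j]
  simp

lemma sum_fixing_zero_eq_sum_decomposeFin {M : Type*} [AddCommMonoid M] {n : ℕ}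
    (F : Perm (Fin (n + 1)) → M) :
    ∑ w with w 0 = 0, F w = ∑ u : Perm (Fin n), F (Perm.decomposeFin.symm (0, u)) := by
  rw [sum_filter, ← Perm.decomposeFin.symm.sum_comp, Fintype.sum_prod_type]
  simp [Perm.decomposeFin_symm_apply_zero]

lemma sum_fixing_zero_choose (m k : ℕ) :
    ∑ w : Perm (Fin (m + 1)) with w 0 = 0, (m + 1 + k - cycDes w - 1).choose m = k ^ m := by
  rcases m with _ | m
  · simp [Subsingleton.elim _ (0 : Fin 1)]
  · rw [sum_fixing_zero_eq_sum_decomposeFin, ← sum_choose_add_card_ascents]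
    refine Fintype.sum_congr _ _ fun u => congrArg (Nat.choose · _) ?_
    have := cycDes_decomposeFin_symm_zero u
    omega

lemma sum_choose_mul_card_fixedPoints (n k : ℕ) :
    ∑ w : Perm (Fin (n + 1)), (n + 1 + k - cycDes w - 1).choose n * #{x | w x = x} =
      (n + 1) * k ^ n := by
  calc ∑ w : Perm (Fin (n + 1)), (n + 1 + k - cycDes w - 1).choose n * #{x | w x = x}
      = ∑ x, ∑ w : Perm (Fin (n + 1)) with w x = x, (n + 1 + k - cycDes w - 1).choose n := by
        simp only [card_filter, mul_sum, mul_ite, mul_one, mul_zero, sum_filter]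
        exact sum_comm
    _ = ∑ _x : Fin (n + 1), k ^ n := by
        refine Fintype.sum_congr _ _ fun x => ?_
        rw [sum_fixing_cycDes_eq_sum_fixing_zero (fun c => (n + 1 + k - c - 1).choose n),
          sum_fixing_zero_choose]
    _ = (n + 1) * k ^ n := by simp

/-- The expected number of fixed points of a permutation of `S_n` distributed as a `k`-riffle
shuffle followed by a cut, `P(w) = (1/(n k^{n-1})) C(n+k-cd(w)-1, n-1)`, equals `1`. -/
theorem expected_fixed_points_eq_one (n k : ℕ) (hn : 1 ≤ n) (hk : 1 ≤ k) :
    ∑ w : Perm (Fin n),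
      (1 / (n * (k : ℚ) ^ (n - 1))) * (Nat.choose (n + k - cycDes w - 1) (n - 1)) *
        ((Finset.univ.filter (fun x : Fin n => w x = x)).card : ℚ) = 1 := by
  obtain ⟨n, rfl⟩ : ∃ m, n = m + 1 := ⟨n - 1, by omega⟩
  have hcount := congrArg (Nat.cast : ℕ → ℚ) (sum_choose_mul_card_fixedPoints n k)
  have hkn : (k : ℚ) ^ n ≠ 0 := pow_ne_zero _ (Nat.cast_ne_zero.2 (by omega))
  push_cast at hcount ⊢
  simp only [mul_assoc, ← mul_sum, hcount]
  field_simp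
end
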